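/- Let X be a locally compact metrisable space with pairwise commuting continuous maps φ₁,…,φ_d : X → X and let J ⊆ {1,…,d}. Then the closure C of the set X_{Jr} of J-recurrent points is a closed invariant set with N_J(C) = C (the subsystem on C has no J-wandering points), and every closed invariant set Y ⊆ X with N_J(Y) = Y satisfies Y ⊆ C. In other words, the closure of X_{Jr} is the largest closed invariant subset of X whose subsystem has no J-wandering points. -/

import Mathlib

open Filter Topology Set

/-- `phiIter φ n = φ₁^[n₁] ∘ ⋯ ∘ φ_d^[n_d]`. -/
def phiIter {X : Type*} {d : ℕ} (φ : Fin d → X → X) (n : Fin d → ℕ) : X → X :=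
  (List.ofFn fun j : Fin d => (φ j)^[n j]).foldr (· ∘ ·) id

/-- A point is `J`-recurrent if `φ_{n_k}(x) → x` along a sequence strictly
increasing in the directions of `J`. -/
def JRecurrent {X : Type*} [TopologicalSpace X] {d : ℕ} (φ : Fin d → X → X)
    (J : Set (Fin d)) (x : X) : Prop :=
  ∃ n : ℕ → Fin d → ℕ, (∀ j ∈ J, StrictMono fun k => n k j) ∧
    Tendsto (fun k => phiIter φ (n k) x) atTop (𝓝 x)

/-- `NJ φ J Y` is the set of points of `Y` which are *not* `J`-wandering for the
subsystem on `Y`: every open neighbourhood `V` of such a point admits some `n ∈ Σ_J`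
and `z ∈ V ∩ Y` with `φ_n(z) ∈ V ∩ Y`. -/
def NJ {X : Type*} [TopologicalSpace X] {d : ℕ} (φ : Fin d → X → X)
    (J : Set (Fin d)) (Y : Set X) : Set X :=
  {y ∈ Y | ∀ V : Set X, IsOpen V → y ∈ V →
    ∃ n : Fin d → ℕ, (∀ j ∈ J, 0 < n j) ∧ ∃ z ∈ V ∩ Y, phiIter φ n z ∈ V ∩ Y}

/-!
Since the maps commute, `φ_m` maps `J`-recurrent points to `J`-recurrent points, so the closure
`C` of `X_{Jr}` is invariant, and a `J`-recurrent point near `y ∈ C` is itself a return inside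
any neighbourhood of `y`. Conversely, let `Y` be closed, invariant and without `J`-wandering
points. Applying non-wandering repeatedly gives returns to any open set meeting `Y` with
arbitrarily large `J`-coordinates, so for each `m` the points of `Y` that come back within
`1/(m+1)` of themselves at a time `n` with `n_j ≥ m` on `J` form an open dense subset of `Y`.
`Y` is locally compact, hence Baire, and every point of the dense intersection of these sets
is `J`-recurrent.
-/

section Iterates

variable {X : Type*} {d : ℕ}

lemma phiIter_succ (φ : Fin (d + 1) → X → X) (n : Fin (d + 1) → ℕ) :
    phiIter φ n = (φ 0)^[n 0] ∘ phiIter (fun j => φ j.succ) (fun j => n j.succ) := by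
  simp [phiIter, List.ofFn_succ]

lemma Function.Commute.phiIter_right {g : X → X} {φ : Fin d → X → X}
    (h : ∀ j, Function.Commute g (φ j)) (n : Fin d → ℕ) :
    Function.Commute g (phiIter φ n) := by
  induction d with
  | zero => exact fun _ => rfl
  | succ d ih =>
    rw [phiIter_succ]
    exact ((h 0).iterate_right _).comp_right (ih (fun j => h j.succ) _)

lemma continuous_phiIter [TopologicalSpace X] {φ : Fin d → X → X}
    (hcont : ∀ j, Continuous (φ j)) (n : Fin d → ℕ) : Continuous (phiIter φ n) := by
  induction d with
  | zero => exact continuous_id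
  | succ d ih =>
    rw [phiIter_succ]
    exact ((hcont 0).iterate _).comp (ih (fun j => hcont j.succ) _)

lemma phiIter_add {φ : Fin d → X → X} (hcomm : ∀ i j, Function.Commute (φ i) (φ j))
    (n m : Fin d → ℕ) : phiIter φ (n + m) = phiIter φ n ∘ phiIter φ m := by
  induction d with
  | zero => rfl
  | succ d ih =>
    have htail : phiIter (fun j => φ j.succ) (fun j => (n + m) j.succ) =
        phiIter (fun j => φ j.succ) (fun j => n j.succ) ∘
          phiIter (fun j => φ j.succ) (fun j => m j.succ) :=
      ih (fun i j => hcomm i.succ j.succ) _ _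
    have hswap : Function.Commute ((φ 0)^[m 0])
        (phiIter (fun j => φ j.succ) (fun j => n j.succ)) :=
      Function.Commute.phiIter_right (fun j => (hcomm j.succ 0).symm.iterate_left _) _
    rw [phiIter_succ, phiIter_succ, phiIter_succ, htail]
    funext x
    simp only [Function.comp_apply, Pi.add_apply, Function.iterate_add_apply, hswap.eq]

lemma phiIter_phiIter_comm {φ : Fin d → X → X} (hcomm : ∀ i j, Function.Commute (φ i) (φ j))
    (n m : Fin d → ℕ) (x : X) :
    phiIter φ n (phiIter φ m x) = phiIter φ m (phiIter φ n x) := by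
  show (phiIter φ n ∘ phiIter φ m) x = (phiIter φ m ∘ phiIter φ n) x
  rw [← phiIter_add hcomm, ← phiIter_add hcomm, add_comm]

end Iterates

section Recurrence

variable {X : Type*} [TopologicalSpace X] {d : ℕ} {φ : Fin d → X → X} {J : Set (Fin d)}

lemma JRecurrent.phiIter_apply (hcont : ∀ j, Continuous (φ j))
    (hcomm : ∀ i j, Function.Commute (φ i) (φ j)) {x : X} (hx : JRecurrent φ J x)
    (m : Fin d → ℕ) : JRecurrent φ J (phiIter φ m x) := by
  obtain ⟨n, hmono, htend⟩ := hx
  refine ⟨n, hmono, ?_⟩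
  simp only [phiIter_phiIter_comm hcomm _ m]
  exact ((continuous_phiIter hcont m).tendsto x).comp htend

lemma JRecurrent.exists_pos_mem {x : X} (hx : JRecurrent φ J x) {U : Set X} (hU : U ∈ 𝓝 x) :
    ∃ n : Fin d → ℕ, (∀ j ∈ J, 0 < n j) ∧ phiIter φ n x ∈ U := by
  obtain ⟨n, hmono, htend⟩ := hx
  obtain ⟨k, hkU, hk⟩ := ((htend.eventually hU).and (eventually_ge_atTop 1)).exists
  exact ⟨n k, fun j hj => (Nat.zero_le _).trans_lt (hmono j hj hk), hkU⟩

lemma image_phiIter_closure_JRecurrent_subset (hcont : ∀ j, Continuous (φ j))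
    (hcomm : ∀ i j, Function.Commute (φ i) (φ j)) (n : Fin d → ℕ) :
    phiIter φ n '' closure {x | JRecurrent φ J x} ⊆ closure {x | JRecurrent φ J x} :=
  (image_closure_subset_closure_image (continuous_phiIter hcont n)).trans <|
    closure_mono <| image_subset_iff.2 fun _ hx => hx.phiIter_apply hcont hcomm n

lemma NJ_closure_JRecurrent (hcont : ∀ j, Continuous (φ j))
    (hcomm : ∀ i j, Function.Commute (φ i) (φ j)) :
    NJ φ J (closure {x | JRecurrent φ J x}) = closure {x | JRecurrent φ J x} := by
  refine Subset.antisymm (sep_subset _ _) fun y hy => ⟨hy, fun V hV hyV => ?_⟩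
  obtain ⟨x, hxV, hx⟩ := mem_closure_iff.1 hy V hV hyV
  obtain ⟨n, hpos, hnV⟩ := hx.exists_pos_mem (hV.mem_nhds hxV)
  exact ⟨n, hpos, x, ⟨hxV, subset_closure hx⟩, hnV,
    image_phiIter_closure_JRecurrent_subset hcont hcomm n ⟨x, subset_closure hx, rfl⟩⟩

lemma exists_large_return_of_subset_NJ (hcont : ∀ j, Continuous (φ j))
    (hcomm : ∀ i j, Function.Commute (φ i) (φ j)) {Y : Set X}
    (hinv : ∀ n : Fin d → ℕ, phiIter φ n '' Y ⊆ Y) (hNJ : Y ⊆ NJ φ J Y) {U : Set X}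
    (hU : IsOpen U) (hne : (U ∩ Y).Nonempty) (m : ℕ) :
    ∃ n : Fin d → ℕ, (∀ j ∈ J, m ≤ n j) ∧ ∃ z ∈ U ∩ Y, phiIter φ n z ∈ U ∩ Y := by
  induction m with
  | zero =>
    obtain ⟨y, hyU, hyY⟩ := hne
    obtain ⟨n, -, hz⟩ := (hNJ hyY).2 U hU hyU
    exact ⟨n, fun _ _ => Nat.zero_le _, hz⟩
  | succ m ih =>
    -- non-wandering at `z` in `U ∩ φ_n⁻¹(U)` turns the return `φ_n z` into `φ_{n+n'} w`
    obtain ⟨n, hn, z, ⟨hzU, hzY⟩, hnzU, -⟩ := ih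
    have hU' : IsOpen (U ∩ phiIter φ n ⁻¹' U) := hU.inter (hU.preimage (continuous_phiIter hcont n))
    obtain ⟨n', hpos, w, ⟨⟨hwU, -⟩, hwY⟩, ⟨-, hn'wU⟩, hn'wY⟩ := (hNJ hzY).2 _ hU' ⟨hzU, hnzU⟩
    refine ⟨n + n', fun j hj => Nat.add_le_add (hn j hj) (hpos j hj), w, ⟨hwU, hwY⟩, ?_⟩
    rw [phiIter_add hcomm, Function.comp_apply]
    exact ⟨hn'wU, hinv n ⟨_, hn'wY, rfl⟩⟩

end Recurrence

section Metric

variable {X : Type*} [PseudoMetricSpace X] {d : ℕ} {φ : Fin d → X → X} {J : Set (Fin d)}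

def almostReturnSet (φ : Fin d → X → X) (J : Set (Fin d)) (m : ℕ) : Set X :=
  {x | ∃ n : Fin d → ℕ, (∀ j ∈ J, m ≤ n j) ∧ dist (phiIter φ n x) x < 1 / (m + 1)}

lemma isOpen_almostReturnSet (hcont : ∀ j, Continuous (φ j)) (m : ℕ) :
    IsOpen (almostReturnSet φ J m) := by
  simp only [almostReturnSet, ofPred_exists]
  exact isOpen_iUnion fun n => isOpen_const.inter <|
    isOpen_lt ((continuous_phiIter hcont n).dist continuous_id) continuous_const

lemma JRecurrent.of_forall_mem_almostReturnSet {x : X} (hx : ∀ m, x ∈ almostReturnSet φ J m) :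
    JRecurrent φ J x := by
  -- pairs `(m_k, n_k)`, increasing in both components, with `φ_{n_k} x` within `1/(m_k+1)` of `x`
  obtain ⟨f, hf, hmono⟩ := exists_seq_of_forall_finset_exists
    (fun p : ℕ × (Fin d → ℕ) => dist (phiIter φ p.2 x) x < 1 / (p.1 + 1))
    (fun p q => p.1 < q.1 ∧ ∀ j ∈ J, p.2 j < q.2 j) fun s _ => by
      set M := s.sup (fun p => p.1 + Finset.univ.sup p.2) + 1
      obtain ⟨n, hn, hdist⟩ := hx M
      refine ⟨(M, n), hdist, fun p hp => ?_⟩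
      have hpM : p.1 + Finset.univ.sup p.2 < M :=
        Nat.lt_succ_of_le (Finset.le_sup (f := fun p => p.1 + Finset.univ.sup p.2) hp)
      exact ⟨by omega, fun j hj =>
        (Finset.le_sup (Finset.mem_univ j)).trans_lt ((by omega : _ < M).trans_le (hn j hj))⟩
  have hlevel : StrictMono fun k => (f k).1 := fun _ _ h => (hmono _ _ h).1
  refine ⟨fun k => (f k).2, fun j hj _ _ h => (hmono _ _ h).2 j hj, ?_⟩
  refine tendsto_iff_dist_tendsto_zero.2 <| squeeze_zero (fun _ => dist_nonneg)
    (fun k => (hf k).le.trans ?_) tendsto_one_div_add_atTop_nhds_zero_nat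
  gcongr
  exact hlevel.id_le k

lemma subset_closure_almostReturnSet (hcont : ∀ j, Continuous (φ j))
    (hcomm : ∀ i j, Function.Commute (φ i) (φ j)) {Y : Set X}
    (hinv : ∀ n : Fin d → ℕ, phiIter φ n '' Y ⊆ Y) (hNJ : Y ⊆ NJ φ J Y) (m : ℕ) :
    Y ⊆ closure (Y ∩ almostReturnSet φ J m) := by
  intro y hy
  refine Metric.mem_closure_iff.2 fun ε hε => ?_
  set δ := min ε (1 / (2 * (m + 1)))
  have hδ : 0 < δ := lt_min hε (by positivity)
  obtain ⟨n, hn, z, ⟨hzy, hzY⟩, hnzy, -⟩ := exists_large_return_of_subset_NJ hcont hcomm hinv hNJ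
    Metric.isOpen_ball ⟨y, Metric.mem_ball_self hδ, hy⟩ m
  have hreturn : dist (phiIter φ n z) z < 1 / (m + 1) :=
    calc dist (phiIter φ n z) z ≤ dist (phiIter φ n z) y + dist z y := dist_triangle_right _ _ _
      _ < δ + δ := add_lt_add hnzy hzy
      _ ≤ 1 / (2 * (m + 1)) + 1 / (2 * (m + 1)) := by gcongr <;> exact min_le_right _ _
      _ = 1 / (m + 1) := by field_simp; ring
  exact ⟨z, ⟨hzY, n, hn, hreturn⟩,
    (dist_comm y z ▸ Metric.mem_ball.1 hzy).trans_le (min_le_left _ _)⟩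

lemma subset_closure_JRecurrent [LocallyCompactSpace X] (hcont : ∀ j, Continuous (φ j))
    (hcomm : ∀ i j, Function.Commute (φ i) (φ j)) {Y : Set X} (hY : IsClosed Y)
    (hinv : ∀ n : Fin d → ℕ, phiIter φ n '' Y ⊆ Y) (hNJ : Y ⊆ NJ φ J Y) :
    Y ⊆ closure {x | JRecurrent φ J x} := by
  have : LocallyCompactSpace Y := hY.locallyCompactSpace
  have hdense : Dense (⋂ m, ((↑) : Y → X) ⁻¹' almostReturnSet φ J m) := by
    refine dense_iInter_of_isOpen (fun m => (isOpen_almostReturnSet hcont m).preimage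
      continuous_subtype_val) fun m => Subtype.dense_iff.2 ?_
    rw [image_preimage_eq_inter_range, Subtype.range_coe, inter_comm]
    exact subset_closure_almostReturnSet hcont hcomm hinv hNJ m
  refine (Subtype.dense_iff.1 hdense).trans (closure_mono ?_)
  rintro _ ⟨y, hy, rfl⟩
  exact JRecurrent.of_forall_mem_almostReturnSet fun m => mem_iInter.1 hy m

end Metric

/-- Lemma 14(ii) (`cent1`): the closure of the `J`-recurrent points is the largest
closed invariant subset of `X` whose subsystem has no `J`-wandering points. -/
theorem closure_JRecurrent_largest {X : Type*} [TopologicalSpace X]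
    [LocallyCompactSpace X] [TopologicalSpace.MetrizableSpace X] {d : ℕ}
    (φ : Fin d → X → X) (hcont : ∀ j, Continuous (φ j))
    (hcomm : ∀ i j, Function.Commute (φ i) (φ j)) (J : Set (Fin d)) :
    IsClosed (closure {x : X | JRecurrent φ J x}) ∧
    (∀ n : Fin d → ℕ,
      phiIter φ n '' closure {x : X | JRecurrent φ J x} ⊆ closure {x : X | JRecurrent φ J x}) ∧
    NJ φ J (closure {x : X | JRecurrent φ J x}) = closure {x : X | JRecurrent φ J x} ∧
    ∀ Y : Set X, IsClosed Y → (∀ n : Fin d → ℕ, phiIter φ n '' Y ⊆ Y) →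
      NJ φ J Y = Y → Y ⊆ closure {x : X | JRecurrent φ J x} := by
  let := TopologicalSpace.metrizableSpaceMetric X
  exact ⟨isClosed_closure, image_phiIter_closure_JRecurrent_subset hcont hcomm,
    NJ_closure_JRecurrent hcont hcomm,
    fun Y hY hinv hNJ => subset_closure_JRecurrent hcont hcomm hY hinv hNJ.ge⟩
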